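/- arXiv:2310.05043 — 5 statements merged into one kernel-verified Lean document; each statement's English description precedes it below -/
import Mathlib

section
/- Let κ be an infinite regular cardinal and let 𝔎 be a full subcategory of a category 𝔏 such that conditions (L0)–(L3) hold and 𝔎 has the amalgamation property. If u⃗ = (U_α)_{α<κ} is a κ-Fraïssé sequence in 𝔎, then its limit U = lim u⃗ (which exists in 𝔏 by (L1)) is a 𝔎-generic object, i.e., U satisfies (G1) and (G2). -/
/-!
A map `g : U ⟶ X` into a `𝔎`-object factors through some `U_i` by (L3). Amalgamating `f : Y ⟶ X`
with this factor gives a `𝔎`-object `D` over both `Y` and `U_i`, and (A) absorbs `D` into the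
sequence at some later stage `U_j`; the composite `U ⟶ U_j ⟶ D ⟶ Y` is the required lift.
-/

open CategoryTheory CategoryTheory.Limits Opposite

universe v u

namespace CategoryTheory.Limits.Cone

-- Inside this namespace a bare `op` resolves to `Cone.op`, hence `Opposite.op` below.
variable {C : Type*} [Category C] {J : Type*} [Preorder J] {F : Jᵒᵖ ⥤ C} (c : Cone F)

theorem π_app_comp_eq_of_amalgamation {i j : J} (hij : i ≤ j) {X Y D : C} {f : Y ⟶ X}
    {f' : F.obj (Opposite.op i) ⟶ X} {p : D ⟶ Y} {q : D ⟶ F.obj (Opposite.op i)}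
    (hsq : p ≫ f = q ≫ f')
    {r : F.obj (Opposite.op j) ⟶ D} (hr : F.map (homOfLE hij).op = r ≫ q) :
    (c.π.app (Opposite.op j) ≫ r ≫ p) ≫ f = c.π.app (Opposite.op i) ≫ f' := by
  rw [Category.assoc, Category.assoc, hsq, ← Category.assoc r, ← hr, c.w_assoc]

theorem exists_lift_of_amalgamation (K : C → Prop) (hF : ∀ i, K (F.obj i))
    (hfactor : ∀ X, K X → ∀ g : c.pt ⟶ X, ∃ (i : Jᵒᵖ) (f' : F.obj i ⟶ X), g = c.π.app i ≫ f')
    (hAP : ∀ (A B B' : C), K A → K B → K B' → ∀ (f : B ⟶ A) (g : B' ⟶ A),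
      ∃ D : C, K D ∧ ∃ (f' : D ⟶ B) (g' : D ⟶ B'), f' ≫ f = g' ≫ g)
    (hA : ∀ (i : J) (Y : C), K Y → ∀ f : Y ⟶ F.obj (Opposite.op i),
      ∃ (j : J) (hij : i ≤ j) (g : F.obj (Opposite.op j) ⟶ Y),
        F.map (homOfLE hij).op = g ≫ f)
    {X Y : C} (hX : K X) (hY : K Y) (f : Y ⟶ X) (g : c.pt ⟶ X) :
    ∃ h : c.pt ⟶ Y, h ≫ f = g := by
  obtain ⟨⟨i⟩, f', rfl⟩ := hfactor X hX g
  obtain ⟨D, hD, p, q, hsq⟩ := hAP X Y (F.obj (Opposite.op i)) hX hY (hF _) f f'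
  obtain ⟨j, hij, r, hr⟩ := hA i D hD q
  exact ⟨c.π.app (Opposite.op j) ≫ r ≫ p, c.π_app_comp_eq_of_amalgamation hij hsq hr⟩

end CategoryTheory.Limits.Cone

theorem stmt0_general {L : Type u} [Category.{v} L] (K : L → Prop)
    (κ : Cardinal.{0})
    -- (L3): arrows from the limit of a sequence into a 𝔎-object factor through a projection
    (hL3 : ∀ (F : (↥(Set.Iio κ.ord))ᵒᵖ ⥤ L), (∀ i, K (F.obj i)) →
      ∀ (c : Cone F), Nonempty (IsLimit c) → ∀ Y : L, K Y → ∀ f : c.pt ⟶ Y,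
      ∃ (i : (↥(Set.Iio κ.ord))ᵒᵖ) (f' : F.obj i ⟶ Y), f = c.π.app i ≫ f')
    -- 𝔎 has the amalgamation property
    (hAP : ∀ (A B C : L), K A → K B → K C → ∀ (f : B ⟶ A) (g : C ⟶ A),
      ∃ D : L, K D ∧ ∃ (f' : D ⟶ B) (g' : D ⟶ C), f' ≫ f = g' ≫ g)
    -- `Useq` is an inverse sequence of length κ in 𝔎
    (Useq : (↥(Set.Iio κ.ord))ᵒᵖ ⥤ L) (hUK : ∀ i, K (Useq.obj i))
    -- condition (U) of a κ-Fraïssé sequence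
    (hU : ∀ X : L, K X → ∃ i : ↥(Set.Iio κ.ord), Nonempty (Useq.obj (op i) ⟶ X))
    -- condition (A) of a κ-Fraïssé sequence
    (hA : ∀ (i : ↥(Set.Iio κ.ord)) (Y : L), K Y → ∀ f : Y ⟶ Useq.obj (op i),
      ∃ (j : ↥(Set.Iio κ.ord)) (hij : i ≤ j) (g : Useq.obj (op j) ⟶ Y),
        Useq.map (homOfLE hij).op = g ≫ f)
    -- `c` realizes `U = lim Useq` in 𝔏
    (c : Cone Useq) (hc : IsLimit c) :
    -- (G1) and (G2): the limit `c.pt` is a 𝔎-generic object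
    (∀ X : L, K X → Nonempty (c.pt ⟶ X)) ∧
    (∀ (X Y : L), K X → K Y → ∀ (f : Y ⟶ X) (g : c.pt ⟶ X),
      ∃ h : c.pt ⟶ Y, h ≫ f = g) := by
  refine ⟨fun X hX => ?_, fun X Y hX hY f g => ?_⟩
  · obtain ⟨i, ⟨φ⟩⟩ := hU X hX
    exact ⟨c.π.app (op i) ≫ φ⟩
  · exact c.exists_lift_of_amalgamation K hUK (hL3 Useq hUK c ⟨hc⟩) hAP hA hX hY f g

theorem stmt0 {L : Type u} [Category.{v} L] (K : L → Prop)
    (κ : Cardinal.{0}) (hκ : κ.IsRegular)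
    -- (L0): all 𝔏-arrows are epimorphisms
    (hL0 : ∀ (A B : L) (f : A ⟶ B), Epi f)
    -- (L1): every inverse sequence of length κ in 𝔎 has a limit in 𝔏
    (hL1 : ∀ F : (↥(Set.Iio κ.ord))ᵒᵖ ⥤ L, (∀ i, K (F.obj i)) →
      ∃ c : Cone F, Nonempty (IsLimit c))
    -- (L2): every 𝔏-object is the limit of an inverse sequence in 𝔎
    (hL2 : ∀ X : L, ∃ (F : (↥(Set.Iio κ.ord))ᵒᵖ ⥤ L), (∀ i, K (F.obj i)) ∧
      ∃ π : (Functor.const _).obj X ⟶ F, Nonempty (IsLimit (⟨X, π⟩ : Cone F)))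
    -- (L3): arrows from the limit of a sequence into a 𝔎-object factor through a projection
    (hL3 : ∀ (F : (↥(Set.Iio κ.ord))ᵒᵖ ⥤ L), (∀ i, K (F.obj i)) →
      ∀ (c : Cone F), Nonempty (IsLimit c) → ∀ Y : L, K Y → ∀ f : c.pt ⟶ Y,
      ∃ (i : (↥(Set.Iio κ.ord))ᵒᵖ) (f' : F.obj i ⟶ Y), f = c.π.app i ≫ f')
    -- 𝔎 has the amalgamation property
    (hAP : ∀ (A B C : L), K A → K B → K C → ∀ (f : B ⟶ A) (g : C ⟶ A),
      ∃ D : L, K D ∧ ∃ (f' : D ⟶ B) (g' : D ⟶ C), f' ≫ f = g' ≫ g)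
    -- `Useq` is an inverse sequence of length κ in 𝔎
    (Useq : (↥(Set.Iio κ.ord))ᵒᵖ ⥤ L) (hUK : ∀ i, K (Useq.obj i))
    -- condition (U) of a κ-Fraïssé sequence
    (hU : ∀ X : L, K X → ∃ i : ↥(Set.Iio κ.ord), Nonempty (Useq.obj (op i) ⟶ X))
    -- condition (A) of a κ-Fraïssé sequence
    (hA : ∀ (i : ↥(Set.Iio κ.ord)) (Y : L), K Y → ∀ f : Y ⟶ Useq.obj (op i),
      ∃ (j : ↥(Set.Iio κ.ord)) (hij : i ≤ j) (g : Useq.obj (op j) ⟶ Y),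
        Useq.map (homOfLE hij).op = g ≫ f)
    -- `c` realizes `U = lim Useq` in 𝔏
    (c : Cone Useq) (hc : IsLimit c) :
    -- (G1) and (G2): the limit `c.pt` is a 𝔎-generic object
    (∀ X : L, K X → Nonempty (c.pt ⟶ X)) ∧
    (∀ (X Y : L), K X → K Y → ∀ (f : Y ⟶ X) (g : c.pt ⟶ X),
      ∃ h : c.pt ⟶ Y, h ≫ f = g) :=
  stmt0_general K κ hL3 hAP Useq hUK hU hA c hc
end

section
/- Let κ be an infinite regular cardinal and let 𝔎 be a full subcategory of a category 𝔏 such that conditions (L0)–(L3) hold. If u⃗ = (U_α)_{α<κ} is an inverse sequence of length κ in 𝔎 whose limit U = lim u⃗ is a 𝔎-generic object, then u⃗ is a κ-Fraïssé sequence in 𝔎. -/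
/-!
(U) is (G1) followed by (L3). For (A), (G2) lifts the projection `U → U_α` along `f : Y → U_α`
to some `h : U → Y`, and (L3) factors `h` through a projection `U → U_β`; taking `β` above `α`
gives `u_α^β = g ∘ f` after composing with the projection `U → U_β`, which is epi by (L0)
and can therefore be cancelled.
-/

open CategoryTheory CategoryTheory.Limits Opposite

universe v u

namespace CategoryTheory.Limits.Cone

variable {J : Type*} [Preorder J] {C : Type*} [Category C] {F : Jᵒᵖ ⥤ C}

theorem map_homOfLE_op_eq_of_π_comp (c : Cone F) {i j : J} (hij : i ≤ j)
    [Epi (c.π.app (Opposite.op j))] {Y : C} (g : F.obj (Opposite.op j) ⟶ Y)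
    (f : Y ⟶ F.obj (Opposite.op i))
    (h : c.π.app (Opposite.op j) ≫ g ≫ f = c.π.app (Opposite.op i)) :
    F.map (homOfLE hij).op = g ≫ f := by
  rw [← cancel_epi (c.π.app (Opposite.op j)), c.w, h]

theorem exists_map_homOfLE_op_eq_comp [IsDirected J (· ≤ ·)] (c : Cone F)
    [∀ j, Epi (c.π.app j)] {i : J} {Y : C} (f : Y ⟶ F.obj (Opposite.op i)) (h : c.pt ⟶ Y)
    (hh : h ≫ f = c.π.app (Opposite.op i)) {k : J} (g : F.obj (Opposite.op k) ⟶ Y)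
    (hg : h = c.π.app (Opposite.op k) ≫ g) :
    ∃ (j : J) (hij : i ≤ j) (g' : F.obj (Opposite.op j) ⟶ Y),
      F.map (homOfLE hij).op = g' ≫ f := by
  obtain ⟨j, hij, hkj⟩ := directed_of (· ≤ ·) i k
  refine ⟨j, hij, F.map (homOfLE hkj).op ≫ g, c.map_homOfLE_op_eq_of_π_comp hij _ _ ?_⟩
  rw [Category.assoc, c.w_assoc, ← Category.assoc, ← hg, hh]

end CategoryTheory.Limits.Cone

theorem stmt1_general {L : Type u} [Category.{v} L] (K : L → Prop)
    (κ : Cardinal.{0})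
    -- (L0): all 𝔏-arrows are epimorphisms
    (hL0 : ∀ (A B : L) (f : A ⟶ B), Epi f)
    -- (L3): arrows from the limit of a sequence into a 𝔎-object factor through a projection
    (hL3 : ∀ (F : (↥(Set.Iio κ.ord))ᵒᵖ ⥤ L), (∀ i, K (F.obj i)) →
      ∀ (c : Cone F), Nonempty (IsLimit c) → ∀ Y : L, K Y → ∀ f : c.pt ⟶ Y,
      ∃ (i : (↥(Set.Iio κ.ord))ᵒᵖ) (f' : F.obj i ⟶ Y), f = c.π.app i ≫ f')
    -- `Useq` is an inverse sequence of length κ in 𝔎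
    (Useq : (↥(Set.Iio κ.ord))ᵒᵖ ⥤ L) (hUK : ∀ i, K (Useq.obj i))
    -- `c` realizes `U = lim Useq` in 𝔏
    (c : Cone Useq) (hc : IsLimit c)
    -- (G1): the limit `c.pt` admits an arrow to every 𝔎-object
    (hG1 : ∀ X : L, K X → Nonempty (c.pt ⟶ X))
    -- (G2): every 𝔏-arrow from `c.pt` lifts against 𝔎-arrows
    (hG2 : ∀ (X Y : L), K X → K Y → ∀ (f : Y ⟶ X) (g : c.pt ⟶ X),
      ∃ h : c.pt ⟶ Y, h ≫ f = g) :
    -- conditions (U) and (A): `Useq` is a κ-Fraïssé sequence in 𝔎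
    (∀ X : L, K X → ∃ i : ↥(Set.Iio κ.ord), Nonempty (Useq.obj (op i) ⟶ X)) ∧
    (∀ (i : ↥(Set.Iio κ.ord)) (Y : L), K Y → ∀ f : Y ⟶ Useq.obj (op i),
      ∃ (j : ↥(Set.Iio κ.ord)) (hij : i ≤ j) (g : Useq.obj (op j) ⟶ Y),
        Useq.map (homOfLE hij).op = g ≫ f) := by
  refine ⟨fun X hX => ?_, fun i Y hY f => ?_⟩
  · obtain ⟨u⟩ := hG1 X hX
    obtain ⟨j, g, -⟩ := hL3 Useq hUK c ⟨hc⟩ X hX u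
    exact ⟨j.unop, ⟨g⟩⟩
  · have := fun j => hL0 _ _ (c.π.app j)
    obtain ⟨h, hh⟩ := hG2 _ Y (hUK _) hY f (c.π.app (op i))
    obtain ⟨k, g, hg⟩ := hL3 Useq hUK c ⟨hc⟩ Y hY h
    exact c.exists_map_homOfLE_op_eq_comp f h hh (k := k.unop) g hg

theorem stmt1 {L : Type u} [Category.{v} L] (K : L → Prop)
    (κ : Cardinal.{0}) (hκ : κ.IsRegular)
    -- (L0): all 𝔏-arrows are epimorphisms
    (hL0 : ∀ (A B : L) (f : A ⟶ B), Epi f)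
    -- (L1): every inverse sequence of length κ in 𝔎 has a limit in 𝔏
    (hL1 : ∀ F : (↥(Set.Iio κ.ord))ᵒᵖ ⥤ L, (∀ i, K (F.obj i)) →
      ∃ c : Cone F, Nonempty (IsLimit c))
    -- (L2): every 𝔏-object is the limit of an inverse sequence in 𝔎
    (hL2 : ∀ X : L, ∃ (F : (↥(Set.Iio κ.ord))ᵒᵖ ⥤ L), (∀ i, K (F.obj i)) ∧
      ∃ π : (Functor.const _).obj X ⟶ F, Nonempty (IsLimit (⟨X, π⟩ : Cone F)))
    -- (L3): arrows from the limit of a sequence into a 𝔎-object factor through a projection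
    (hL3 : ∀ (F : (↥(Set.Iio κ.ord))ᵒᵖ ⥤ L), (∀ i, K (F.obj i)) →
      ∀ (c : Cone F), Nonempty (IsLimit c) → ∀ Y : L, K Y → ∀ f : c.pt ⟶ Y,
      ∃ (i : (↥(Set.Iio κ.ord))ᵒᵖ) (f' : F.obj i ⟶ Y), f = c.π.app i ≫ f')
    -- `Useq` is an inverse sequence of length κ in 𝔎
    (Useq : (↥(Set.Iio κ.ord))ᵒᵖ ⥤ L) (hUK : ∀ i, K (Useq.obj i))
    -- `c` realizes `U = lim Useq` in 𝔏
    (c : Cone Useq) (hc : IsLimit c)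
    -- (G1): the limit `c.pt` admits an arrow to every 𝔎-object
    (hG1 : ∀ X : L, K X → Nonempty (c.pt ⟶ X))
    -- (G2): every 𝔏-arrow from `c.pt` lifts against 𝔎-arrows
    (hG2 : ∀ (X Y : L), K X → K Y → ∀ (f : Y ⟶ X) (g : c.pt ⟶ X),
      ∃ h : c.pt ⟶ Y, h ≫ f = g) :
    -- conditions (U) and (A): `Useq` is a κ-Fraïssé sequence in 𝔎
    (∀ X : L, K X → ∃ i : ↥(Set.Iio κ.ord), Nonempty (Useq.obj (op i) ⟶ X)) ∧
    (∀ (i : ↥(Set.Iio κ.ord)) (Y : L), K Y → ∀ f : Y ⟶ Useq.obj (op i),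
      ∃ (j : ↥(Set.Iio κ.ord)) (hij : i ≤ j) (g : Useq.obj (op j) ⟶ Y),
        Useq.map (homOfLE hij).op = g ≫ f) :=
  stmt1_general K κ hL0 hL3 Useq hUK c hc hG1 hG2
end

section
/- Fix a compact Hausdorff 0-dimensional space K. Let (φ_α : K → U_α)_{α<ω₁} be a continuous ω₁-Fraïssé sequence in the category 𝔠_K, let U_{ω₁} = lim←(U_α)_{α<ω₁} be the inverse limit of the spaces U_α, and let φ_{ω₁} : K → U_{ω₁} be the induced limit map. Then the image φ_{ω₁}[K] is a nowhere dense closed P-set in U_{ω₁}. -/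
open Set Function

/-- A topological space is 0-dimensional if the clopen sets form a base of the topology. -/
def ZeroDim (X : Type*) [TopologicalSpace X] : Prop :=
  TopologicalSpace.IsTopologicalBasis {s : Set X | IsClopen s}

/-- A subset `P` of a topological space is a P-set if the intersection of every countable
family of neighborhoods of `P` is again a neighborhood of `P`. -/
def IsPSet {X : Type*} [TopologicalSpace X] (P : Set X) : Prop :=
  ∀ V : ℕ → Set X, (∀ n, P ⊆ interior (V n)) → P ⊆ interior (⋂ n, V n)

/-- A compact metrizable 0-dimensional space: the codomain of an object of `𝔠_K`. -/
structure CMZ : Type 2 where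
  carrier : Type 1
  top : TopologicalSpace carrier
  compact : @CompactSpace carrier top
  metrizable : @TopologicalSpace.MetrizableSpace carrier top
  zeroDim : @ZeroDim carrier top

attribute [instance] CMZ.top CMZ.compact CMZ.metrizable

/-- The first uncountable ordinal. -/
noncomputable def omega1 : Ordinal := (Cardinal.aleph 1).ord

open Set Function Filter Topology TopologicalSpace

/-!
Write `Φ : K → lim U` for the limit map and `π i` for the projections of the limit. Given a
closed set `D ⊆ U i` containing `φ i [K]`, absorption applied to the arrow `U i ⊕ D → U i`
(identity on one summand, inclusion on the other) yields `j ≥ i` and a clopen set `C ⊆ U j`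
around `φ j [K]` that `u i j` maps into `D`, while `u i j` still maps `Cᶜ` onto `U i`.

Take `D = φ i [K]`. The projections are onto, so every basic open set `π i ⁻¹' V` meets
`π j ⁻¹' Cᶜ`, which misses `Φ[K]`; hence `Φ[K]` has empty interior. For the P-set property,
every neighbourhood of the compact set `Φ[K]` contains `π i ⁻¹' φ i [K]` for some `i`;
countably many such indices have an upper bound `η < ω₁`, and the clopen set `C` obtained
from `D = φ η [K]` pulls back to an open neighbourhood of `Φ[K]` inside all of them.
-/

instance CMZ.totallySeparatedSpace (X : CMZ) : TotallySeparatedSpace X.carrier :=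
  totallySeparatedSpace_of_t0_of_basis_clopen X.zeroDim

instance CMZ.secondCountableTopology (X : CMZ) : SecondCountableTopology X.carrier := by
  let := metrizableSpaceMetric X.carrier
  infer_instance

def CMZ.of (X : Type 1) [TopologicalSpace X] [CompactSpace X] [MetrizableSpace X]
    [TotallyDisconnectedSpace X] : CMZ :=
  ⟨X, ‹_›, ‹_›, ‹_›, isTopologicalBasis_isClopen⟩

abbrev InverseLimit {ι : Type*} [Preorder ι] (X : ι → Type*)
    (u : ∀ i j : ι, i ≤ j → X j → X i) : Type _ :=
  {y : ∀ i, X i // ∀ i j (h : i ≤ j), u i j h (y j) = y i}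

namespace InverseLimit

variable {ι : Type*} [Preorder ι] {X : ι → Type*} {u : ∀ i j : ι, i ≤ j → X j → X i}

variable (u) in
def proj (i : ι) (y : InverseLimit X u) : X i := y.1 i

def lift {K : Type*} (φ : ∀ i, K → X i) (hφ : ∀ i j (h : i ≤ j), u i j h ∘ φ j = φ i) :
    K → InverseLimit X u :=
  fun x => ⟨fun i => φ i x, fun i j h => congrFun (hφ i j h) x⟩

theorem map_proj (y : InverseLimit X u) {i j : ι} (h : i ≤ j) :
    u i j h (proj u j y) = proj u i y :=
  y.2 i j h

theorem preimage_proj_of_le {i j : ι} (h : i ≤ j) (V : Set (X i)) :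
    proj u j ⁻¹' (u i j h ⁻¹' V) = proj u i ⁻¹' V := by
  ext y
  simp only [mem_preimage, map_proj y h]

variable [∀ i, TopologicalSpace (X i)]

theorem continuous_proj (i : ι) : Continuous (proj u i) :=
  (continuous_apply i).comp continuous_subtype_val

theorem continuous_lift {K : Type*} [TopologicalSpace K] {φ : ∀ i, K → X i}
    (hφ_cont : ∀ i, Continuous (φ i)) (hφ : ∀ i j (h : i ≤ j), u i j h ∘ φ j = φ i) :
    Continuous (lift φ hφ) :=
  (continuous_pi hφ_cont).subtype_mk _

variable [IsDirectedOrder ι] [Nonempty ι] (hu_cont : ∀ i j h, Continuous (u i j h))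
include hu_cont

theorem exists_isOpen_preimage_proj_subset_of_mem_nhds {w : InverseLimit X u}
    {S : Set (InverseLimit X u)} (hS : S ∈ 𝓝 w) :
    ∃ (i : ι) (V : Set (X i)), IsOpen V ∧ proj u i w ∈ V ∧ proj u i ⁻¹' V ⊆ S := by
  have hnhds : 𝓝 w = ⨅ i, comap (proj u i) (𝓝 (proj u i w)) := by
    rw [nhds_subtype_eq_comap, nhds_pi, Filter.pi, comap_iInf]
    simp only [comap_comap]
    rfl
  have hmono : ∀ i j (h : i ≤ j),
      comap (proj u j) (𝓝 (proj u j w)) ≤ comap (proj u i) (𝓝 (proj u i w)) := by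
    intro i j h
    rw [← map_proj w h, show proj u i = u i j h ∘ proj u j from funext fun y =>
      (map_proj y h).symm, ← comap_comap]
    exact comap_mono (hu_cont i j h).continuousAt.le_comap
  have hdir : Directed (· ≥ ·) fun i => comap (proj u i) (𝓝 (proj u i w)) := fun i j =>
    let ⟨k, hik, hjk⟩ := directed_of (· ≤ ·) i j
    ⟨k, hmono i k hik, hmono j k hjk⟩
  rw [hnhds, mem_iInf_of_directed hdir] at hS
  obtain ⟨i, hi⟩ := hS
  obtain ⟨t, ht, hts⟩ := mem_comap.mp hi
  obtain ⟨V, hVt, hVo, hwV⟩ := mem_nhds_iff.mp ht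
  exact ⟨i, V, hVo, hwV, (preimage_mono hVt).trans hts⟩

theorem exists_isOpen_preimage_proj_subset_of_isCompact
    {S V : Set (InverseLimit X u)} (hS : IsCompact S) (hSV : S ⊆ interior V) :
    ∃ (i : ι) (W : Set (X i)), IsOpen W ∧ S ⊆ proj u i ⁻¹' W ∧ proj u i ⁻¹' W ⊆ V := by
  have hloc : ∀ w ∈ S,
      ∃ (i : ι) (O : Set (X i)), IsOpen O ∧ proj u i w ∈ O ∧ proj u i ⁻¹' O ⊆ V :=
    fun w hw => exists_isOpen_preimage_proj_subset_of_mem_nhds hu_cont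
      (mem_interior_iff_mem_nhds.mp (hSV hw))
  classical
  choose! i O hOo hwO hOV using hloc
  obtain ⟨t, htS, hSt⟩ := hS.elim_nhds_subcover (fun w => proj u (i w) ⁻¹' O w)
    fun w hw => ((hOo w hw).preimage (continuous_proj _)).mem_nhds (hwO w hw)
  obtain ⟨m, hm⟩ := (t.image i).exists_le
  have him : ∀ w ∈ t, i w ≤ m := fun w hw => hm _ (Finset.mem_image_of_mem i hw)
  have hpre : proj u m ⁻¹' (⋃ (w) (hw : w ∈ t), u (i w) m (him w hw) ⁻¹' O w) =
      ⋃ w ∈ t, proj u (i w) ⁻¹' O w := by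
    simp only [preimage_iUnion, preimage_proj_of_le]
  refine ⟨m, ⋃ (w) (hw : w ∈ t), u (i w) m (him w hw) ⁻¹' O w,
    isOpen_iUnion fun w => isOpen_iUnion fun hw => (hOo w (htS w hw)).preimage (hu_cont _ _ _),
    ?_, ?_⟩
  · rwa [hpre]
  · rw [hpre]
    exact iUnion₂_subset fun w hw => hOV w (htS w hw)

variable [∀ i, CompactSpace (X i)] [∀ i, T2Space (X i)]

theorem surjective_proj (hu_surj : ∀ i j h, Surjective (u i j h))
    (hu_comp : ∀ i j k (hij : i ≤ j) (hjk : j ≤ k),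
      u i j hij ∘ u j k hjk = u i k (hij.trans hjk))
    (j : ι) : Surjective (proj u j) := by
  classical
  intro z
  have hne : ∀ i, Nonempty (X i) := fun i =>
    let ⟨m, hjm, him⟩ := directed_of (· ≤ ·) j i
    ⟨u i m him (hu_surj j m hjm z).choose⟩
  let T : ι → Set (∀ i, X i) := fun m =>
    {y | y j = z} ∩ ⋂ (i) (k) (h : i ≤ k) (_ : k ≤ m), {y | u i k h (y k) = y i}
  have hT_closed : ∀ m, IsClosed (T m) := fun m =>
    (isClosed_eq (continuous_apply j) continuous_const).inter <|
      isClosed_iInter fun i => isClosed_iInter fun k => isClosed_iInter fun h =>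
        isClosed_iInter fun _ =>
          isClosed_eq ((hu_cont i k h).comp (continuous_apply k)) (continuous_apply i)
  have hT_nonempty : ∀ m, (T m).Nonempty := by
    intro m
    obtain ⟨M, hjM, hmM⟩ := directed_of (· ≤ ·) j m
    obtain ⟨z', hz'⟩ := hu_surj j M hjM z
    refine ⟨fun i => if h : i ≤ M then u i M h z' else Classical.arbitrary _, ?_, ?_⟩
    · simpa [dif_pos hjM] using hz'
    · simp only [mem_iInter, mem_ofPred_eq]
      intro i k hik hkm
      rw [dif_pos (hkm.trans hmM), dif_pos ((hik.trans hkm).trans hmM)]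
      exact congrFun (hu_comp i k M hik (hkm.trans hmM)) z'
  have hT_anti : ∀ m m', m ≤ m' → T m' ⊆ T m := fun m m' hmm' y ⟨hyj, hy⟩ =>
    ⟨hyj, by
      simp only [mem_iInter] at hy ⊢
      exact fun i k hik hkm => hy i k hik (hkm.trans hmm')⟩
  have hT_directed : Directed (· ⊇ ·) T := fun m₁ m₂ =>
    let ⟨m, h₁, h₂⟩ := directed_of (· ≤ ·) m₁ m₂
    ⟨m, hT_anti m₁ m h₁, hT_anti m₂ m h₂⟩
  obtain ⟨y, hy⟩ := IsCompact.nonempty_iInter_of_directed_nonempty_isCompact_isClosed T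
    hT_directed hT_nonempty (fun m => (hT_closed m).isCompact) hT_closed
  rw [mem_iInter] at hy
  refine ⟨⟨y, fun i k h => ?_⟩, (hy j).1⟩
  have hyk := (hy k).2
  simp only [mem_iInter] at hyk
  exact hyk i k h le_rfl

end InverseLimit

theorem omega1_eq_omega_one : omega1 = Ordinal.omega 1 :=
  Cardinal.ord_aleph 1

theorem bddAbove_range_of_nat_Iio_omega1 (m : ℕ → Iio omega1) : BddAbove (range m) := by
  have hlt : ∀ n, (m n).1 < Ordinal.omega 1 := fun n => omega1_eq_omega_one ▸ (m n).2
  have hsup : ⨆ n, (m n).1 < omega1 := by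
    simpa only [omega1_eq_omega_one] using Ordinal.iSup_lt_omega_one hlt
  exact ⟨⟨_, hsup⟩, forall_mem_range.mpr fun n => Ordinal.le_iSup (fun n => (m n).1) n⟩

instance : Nonempty (Iio omega1) :=
  ⟨⟨0, omega1_eq_omega_one ▸ Ordinal.omega_pos 1⟩⟩

section Fraisse

variable {ι : Type*} [Preorder ι] {K : Type*} [TopologicalSpace K] {U : ι → CMZ}
  {u : ∀ i j : ι, i ≤ j → (U j).carrier → (U i).carrier} {φ : ∀ i, K → (U i).carrier}

variable (U u φ) in
/-- Condition (A) of a Fraïssé sequence in `𝔠_K`. -/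
def Absorbing : Prop :=
  ∀ (i : ι) (X : CMZ) (ψ : K → X.carrier), Continuous ψ →
    ∀ q : X.carrier → (U i).carrier, Continuous q → Surjective q → q ∘ ψ = φ i →
    ∃ (j : ι) (hij : i ≤ j) (g : (U j).carrier → X.carrier),
      Continuous g ∧ Surjective g ∧ q ∘ g = u i j hij ∧ g ∘ φ j = ψ

theorem Absorbing.exists_isClopen_mapsTo_surjOn (hA : Absorbing U u φ) {i : ι}
    (hφ_cont : Continuous (φ i)) {D : Set (U i).carrier} (hD : IsClosed D) (hφD : range (φ i) ⊆ D) :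
    ∃ (j : ι) (hij : i ≤ j) (C : Set (U j).carrier), IsClopen C ∧ range (φ j) ⊆ C ∧
      MapsTo (u i j hij) C D ∧ SurjOn (u i j hij) Cᶜ univ := by
  have := isCompact_iff_compactSpace.mp hD.isCompact
  let ψ : K → (U i).carrier ⊕ D := Sum.inr ∘ codRestrict (φ i) D (range_subset_iff.mp hφD)
  let q : (U i).carrier ⊕ D → (U i).carrier := Sum.elim id Subtype.val
  obtain ⟨j, hij, g, hg_cont, hg_surj, hqg, hgφ⟩ :=
    hA i (.of ((U i).carrier ⊕ D)) ψ (continuous_inr.comp (hφ_cont.codRestrict _)) q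
      (continuous_id.sumElim continuous_subtype_val) (fun x => ⟨.inl x, rfl⟩) rfl
  have hu : ∀ z, u i j hij z = q (g z) := fun z => (congrFun hqg z).symm
  refine ⟨j, hij, g ⁻¹' range Sum.inr, isClopen_range_inr.preimage hg_cont, ?_, ?_, ?_⟩
  · rintro _ ⟨x, rfl⟩
    exact ⟨_, (congrFun hgφ x).symm⟩
  · rintro z ⟨d, hd⟩
    rw [hu, ← hd]
    exact d.2
  · intro x _
    obtain ⟨z, hz⟩ := hg_surj (.inl x)
    refine ⟨z, fun ⟨d, hd⟩ => Sum.inr_ne_inl (hd.trans hz), ?_⟩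
    rw [hu, hz]
    rfl

variable [IsDirectedOrder ι] [Nonempty ι] [CompactSpace K]
  (hu_cont : ∀ i j h, Continuous (u i j h)) (hφ_cont : ∀ i, Continuous (φ i))
  (hφ : ∀ i j (h : i ≤ j), u i j h ∘ φ j = φ i)
include hu_cont hφ_cont

theorem Absorbing.isNowhereDense_range_lift (hA : Absorbing U u φ)
    (hu_surj : ∀ i j h, Surjective (u i j h))
    (hu_comp : ∀ i j k (hij : i ≤ j) (hjk : j ≤ k),
      u i j hij ∘ u j k hjk = u i k (hij.trans hjk)) :
    IsNowhereDense (range (InverseLimit.lift φ hφ)) := by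
  have hclosed := (isCompact_range (InverseLimit.continuous_lift hφ_cont hφ)).isClosed
  rw [hclosed.isNowhereDense_iff, eq_empty_iff_forall_notMem]
  intro w hw
  obtain ⟨i, V, -, hwV, hVsub⟩ :=
    InverseLimit.exists_isOpen_preimage_proj_subset_of_mem_nhds hu_cont
      (mem_interior_iff_mem_nhds.mp hw)
  obtain ⟨j, hij, C, -, hφC, -, hCsurj⟩ :=
    hA.exists_isClopen_mapsTo_surjOn (hφ_cont i) (isCompact_range (hφ_cont i)).isClosed
      subset_rfl
  obtain ⟨z, hzC, hz⟩ := hCsurj (mem_univ (InverseLimit.proj u i w))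
  obtain ⟨y, rfl⟩ := InverseLimit.surjective_proj hu_cont hu_surj hu_comp j z
  obtain ⟨x, rfl⟩ := hVsub (show InverseLimit.proj u i y ∈ V by
    rwa [← InverseLimit.map_proj y hij, hz])
  exact hzC (hφC ⟨x, rfl⟩)

theorem Absorbing.isPSet_range_lift (hA : Absorbing U u φ)
    (hσ : ∀ m : ℕ → ι, BddAbove (range m)) :
    IsPSet (range (InverseLimit.lift φ hφ)) := by
  intro V hV
  have hS := isCompact_range (InverseLimit.continuous_lift hφ_cont hφ)
  choose m W _ hSW hWV using fun n =>
    InverseLimit.exists_isOpen_preimage_proj_subset_of_isCompact hu_cont hS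
      (range_subset_iff.mpr fun x => hV n ⟨x, rfl⟩)
  obtain ⟨η, hη⟩ := hσ m
  obtain ⟨β, hηβ, C, hC, hφC, hCD, -⟩ :=
    hA.exists_isClopen_mapsTo_surjOn (hφ_cont η) (isCompact_range (hφ_cont η)).isClosed
      subset_rfl
  have hCV : InverseLimit.proj u β ⁻¹' C ⊆ ⋂ n, V n := by
    intro y hy
    obtain ⟨x, hx⟩ := hCD hy
    rw [InverseLimit.map_proj y hηβ] at hx
    refine mem_iInter.mpr fun n => hWV n ?_
    have hmn : m n ≤ η := hη ⟨n, rfl⟩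
    rw [mem_preimage, ← InverseLimit.map_proj y hmn, ← hx, ← comp_apply (f := u _ _ hmn), hφ]
    exact hSW n ⟨x, rfl⟩
  have hΦC : range (InverseLimit.lift φ hφ) ⊆ InverseLimit.proj u β ⁻¹' C := by
    rintro _ ⟨x, rfl⟩
    exact hφC ⟨x, rfl⟩
  exact hΦC.trans (interior_maximal hCV (hC.isOpen.preimage (InverseLimit.continuous_proj β)))

end Fraisse

theorem stmt3_general
    (K : Type 1) [TopologicalSpace K] [CompactSpace K]
    -- an inverse sequence of objects `φ i : K → U i` of `𝔠_K`, indexed by the ordinals `< ω₁`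
    (U : ↥(Set.Iio omega1) → CMZ)
    (u : ∀ i j : ↥(Set.Iio omega1), i ≤ j → (U j).carrier → (U i).carrier)
    (hu_cont : ∀ i j h, Continuous (u i j h))
    (hu_surj : ∀ i j h, Surjective (u i j h))
    (hu_comp : ∀ i j k (hij : i ≤ j) (hjk : j ≤ k),
      u i j hij ∘ u j k hjk = u i k (le_trans hij hjk))
    (φ : ∀ i, K → (U i).carrier)
    (hφ_cont : ∀ i, Continuous (φ i))
    (hφ : ∀ i j (h : i ≤ j), u i j h ∘ φ j = φ i)
    -- condition (A) of an ω₁-Fraïssé sequence in `𝔠_K`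
    (hfraisseA : ∀ (i : ↥(Set.Iio omega1)) (X : CMZ) (ψ : K → X.carrier), Continuous ψ →
      ∀ q : X.carrier → (U i).carrier, Continuous q → Surjective q → q ∘ ψ = φ i →
      ∃ (j : ↥(Set.Iio omega1)) (hij : i ≤ j) (g : (U j).carrier → X.carrier),
        Continuous g ∧ Surjective g ∧ q ∘ g = u i j hij ∧ g ∘ φ j = ψ) :
    -- the image of `K` under the limit map `φ_{ω₁} : K → U_{ω₁} = lim U` is a
    -- nowhere dense closed P-set in the inverse limit
    IsClosed (Set.range (fun x : K =>
      (⟨fun i => φ i x, fun i j h => congrFun (hφ i j h) x⟩ :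
        {y : ∀ i, (U i).carrier // ∀ i j (h : i ≤ j), u i j h (y j) = y i}))) ∧
    IsNowhereDense (Set.range (fun x : K =>
      (⟨fun i => φ i x, fun i j h => congrFun (hφ i j h) x⟩ :
        {y : ∀ i, (U i).carrier // ∀ i j (h : i ≤ j), u i j h (y j) = y i}))) ∧
    IsPSet (Set.range (fun x : K =>
      (⟨fun i => φ i x, fun i j h => congrFun (hφ i j h) x⟩ :
        {y : ∀ i, (U i).carrier // ∀ i j (h : i ≤ j), u i j h (y j) = y i}))) := by
  have hA : Absorbing U u φ := hfraisseA
  exact ⟨(isCompact_range (InverseLimit.continuous_lift hφ_cont hφ)).isClosed,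
    hA.isNowhereDense_range_lift hu_cont hφ_cont hφ hu_surj hu_comp,
    hA.isPSet_range_lift hu_cont hφ_cont hφ bddAbove_range_of_nat_Iio_omega1⟩

theorem stmt3
    (K : Type 1) [TopologicalSpace K] [CompactSpace K] [T2Space K] (hK : ZeroDim K)
    -- an inverse sequence of objects `φ i : K → U i` of `𝔠_K`, indexed by the ordinals `< ω₁`
    (U : ↥(Set.Iio omega1) → CMZ)
    (u : ∀ i j : ↥(Set.Iio omega1), i ≤ j → (U j).carrier → (U i).carrier)
    (hu_cont : ∀ i j h, Continuous (u i j h))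
    (hu_surj : ∀ i j h, Surjective (u i j h))
    (hu_id : ∀ i, u i i le_rfl = id)
    (hu_comp : ∀ i j k (hij : i ≤ j) (hjk : j ≤ k),
      u i j hij ∘ u j k hjk = u i k (le_trans hij hjk))
    (φ : ∀ i, K → (U i).carrier)
    (hφ_cont : ∀ i, Continuous (φ i))
    (hφ : ∀ i j (h : i ≤ j), u i j h ∘ φ j = φ i)
    -- condition (U) of an ω₁-Fraïssé sequence in `𝔠_K`
    (hfraisseU : ∀ (X : CMZ) (ψ : K → X.carrier), Continuous ψ →
      ∃ (i : ↥(Set.Iio omega1)) (q : (U i).carrier → X.carrier),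
        Continuous q ∧ Surjective q ∧ q ∘ φ i = ψ)
    -- condition (A) of an ω₁-Fraïssé sequence in `𝔠_K`
    (hfraisseA : ∀ (i : ↥(Set.Iio omega1)) (X : CMZ) (ψ : K → X.carrier), Continuous ψ →
      ∀ q : X.carrier → (U i).carrier, Continuous q → Surjective q → q ∘ ψ = φ i →
      ∃ (j : ↥(Set.Iio omega1)) (hij : i ≤ j) (g : (U j).carrier → X.carrier),
        Continuous g ∧ Surjective g ∧ q ∘ g = u i j hij ∧ g ∘ φ j = ψ)
    -- the sequence is continuous: at every limit ordinal the sequence is the inverse limit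
    -- of its restriction (the canonical comparison map is a bijection, hence, all spaces
    -- being compact Hausdorff, a homeomorphism)
    (hcontinuous : ∀ i : ↥(Set.Iio omega1), Order.IsSuccLimit i.1 →
      Function.Bijective (fun x : (U i).carrier =>
        (⟨fun j : {j : ↥(Set.Iio omega1) // j < i} => u j.1 i (le_of_lt j.2) x,
          fun j k h => congrFun (hu_comp j.1 k.1 i h (le_of_lt k.2)) x⟩ :
          {y : ∀ j : {j : ↥(Set.Iio omega1) // j < i}, (U j.1).carrier //
            ∀ j k (h : j.1 ≤ k.1), u j.1 k.1 h (y k) = y j}))) :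
    -- the image of `K` under the limit map `φ_{ω₁} : K → U_{ω₁} = lim U` is a
    -- nowhere dense closed P-set in the inverse limit
    IsClosed (Set.range (fun x : K =>
      (⟨fun i => φ i x, fun i j h => congrFun (hφ i j h) x⟩ :
        {y : ∀ i, (U i).carrier // ∀ i j (h : i ≤ j), u i j h (y j) = y i}))) ∧
    IsNowhereDense (Set.range (fun x : K =>
      (⟨fun i => φ i x, fun i j h => congrFun (hφ i j h) x⟩ :
        {y : ∀ i, (U i).carrier // ∀ i j (h : i ≤ j), u i j h (y j) = y i}))) ∧
    IsPSet (Set.range (fun x : K =>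
      (⟨fun i => φ i x, fun i j h => congrFun (hφ i j h) x⟩ :
        {y : ∀ i, (U i).carrier // ∀ i j (h : i ≤ j), u i j h (y j) = y i}))) :=
  stmt3_general K U u hu_cont hu_surj hu_comp φ hφ_cont hφ hfraisseA
end

section
/- Let κ and λ be infinite regular cardinals with λ ≤ κ and let (K,u) be a λ-ultrametric space of weight at most κ. Let X, Y, Z be discrete sets, each of cardinality at most |κ^γ| for some γ < λ, let f : K → X, g : K → Y be uniformly continuous maps (with respect to u, where a map into a discrete set is uniformly continuous iff there is δ < λ such that it is constant on every closed ball B_δ(a)), and let q₁ : X → Z, q₂ : Y → Z be surjections with q₁ ∘ f = q₂ ∘ g. Then the pullback W = {(x,y) ∈ X × Y : q₁(x) = q₂(y)}, with coordinate projections f₁ : W → X and g₁ : W → Y, is a discrete set of cardinality at most |κ^γ'| for some γ' < λ, f₁ and g₁ are surjections with q₁ ∘ f₁ = q₂ ∘ g₁, and there is a uniformly continuous map k : K → W with f = f₁ ∘ k and g = g₁ ∘ k. -/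
open Set Function

universe u v

/-- The closed ball of radius `α` and center `x` in an ordinal-valued ultrametric space:
`B_α(x) = {y | u x y ≥ α}`. -/
def Ball {X : Type u} (u : X → X → Ordinal) (α : Ordinal) (x : X) : Set X :=
  {y | α ≤ u x y}

/-- `u` is a `γ`-ultrametric on `X`: it takes values in `γ + 1` (i.e. values `≤ γ`),
`u x y = γ` iff `x = y`, the ultrametric triangle law, and symmetry. -/
structure IsUltrametric {X : Type u} (γ : Ordinal) (u : X → X → Ordinal) : Prop where
  le_gamma : ∀ x y, u x y ≤ γ
  eq_gamma_iff : ∀ x y, u x y = γ ↔ x = y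
  triangle : ∀ x y z, min (u y x) (u x z) ≤ u y z
  symm : ∀ x y, u x y = u y x

/-- The topology induced by a `γ`-ultrametric: the closed balls `B_α(x)`, `α < γ`,
form a base. -/
def ballTopology {X : Type u} (γ : Ordinal) (u : X → X → Ordinal) : TopologicalSpace X :=
  TopologicalSpace.generateFrom {s : Set X | ∃ x α, α < γ ∧ s = Ball u α x}

/-- `f` is uniformly continuous from the `γX`-ultrametric space `(X, u)` to the
`γY`-ultrametric space `(Y, d)`. -/
def UnifCont {X : Type u} {Y : Type v} (γX γY : Ordinal)
    (u : X → X → Ordinal) (d : Y → Y → Ordinal) (f : X → Y) : Prop :=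
  ∀ ε < γY, ∃ δ < γX, ∀ a b, δ ≤ u a b → ε ≤ d (f a) (f b)

/-- A discrete set regarded as a `γ`-ultrametric space. -/
noncomputable def discreteUltra {X : Type u} (γ : Ordinal) (a b : X) : Ordinal :=
  @ite _ (a = b) (Classical.propDecidable _) γ 0

/-- `A` is uniformly nowhere dense in the `γ`-ultrametric space `(X, u)`. -/
def UnifNwd {X : Type u} (γ : Ordinal) (u : X → X → Ordinal) (A : Set X) : Prop :=
  ∀ α < γ, ∃ β, α < β ∧ β < γ ∧ ∀ b : X, ∃ a ∈ Ball u α b, Ball u β a ∩ A = ∅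

/-- The space `κ^λ` of functions from (the ordinals below) `λ` to (the ordinals below) `κ`. -/
def funSpace (κ lam : Cardinal.{0}) : Type 1 :=
  ↥(Set.Iio lam.ord) → ↥(Set.Iio κ.ord)

/-- The canonical `λ`-ultrametric on `κ^λ`: `u(a,b) = sup {α < λ : a↾α = b↾α}`. -/
noncomputable def funUltra (κ lam : Cardinal.{0}) (a b : funSpace κ lam) : Ordinal :=
  sSup {α : Ordinal | α < lam.ord ∧ ∀ β : ↥(Set.Iio lam.ord), (β : Ordinal) < α → a β = b β}

noncomputable instance (κ lam : Cardinal.{0}) : TopologicalSpace (funSpace κ lam) :=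
  ballTopology lam.ord (funUltra κ lam)

/-- The space `X` with topology `t` has weight (least cardinality of a base) at most `c`. -/
def WeightLE (X : Type u) (t : TopologicalSpace X) (c : Cardinal.{0}) : Prop :=
  ∃ B : Set (Set X), t.IsTopologicalBasis B ∧ Cardinal.mk B ≤ Cardinal.lift.{u} c

def CardLePowBelow (κ lam : Cardinal.{0}) (X : Type v) : Prop :=
  ∃ γ < lam.ord, Cardinal.mk X ≤ Cardinal.lift.{v} (κ ^ γ.card)

namespace CardLePowBelow

variable {κ lam : Cardinal.{0}} {X Y : Type v}

theorem of_injective {i : X → Y} (hi : Injective i) (hY : CardLePowBelow κ lam Y) :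
    CardLePowBelow κ lam X :=
  let ⟨γ, hγ, hle⟩ := hY
  ⟨γ, hγ, (Cardinal.mk_le_of_injective hi).trans hle⟩

theorem prod (hlam : Cardinal.aleph0 ≤ lam) (hX : CardLePowBelow κ lam X)
    (hY : CardLePowBelow κ lam Y) : CardLePowBelow κ lam (X × Y) := by
  obtain ⟨γ₁, hγ₁, hX⟩ := hX
  obtain ⟨γ₂, hγ₂, hY⟩ := hY
  refine ⟨γ₁ + γ₂, Ordinal.isPrincipal_add_ord hlam hγ₁ hγ₂, ?_⟩
  calc Cardinal.mk (X × Y) = Cardinal.mk X * Cardinal.mk Y := by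
        rw [Cardinal.mk_prod, Cardinal.lift_id, Cardinal.lift_id]
    _ ≤ Cardinal.lift.{v} (κ ^ γ₁.card) * Cardinal.lift.{v} (κ ^ γ₂.card) := mul_le_mul' hX hY
    _ = Cardinal.lift.{v} (κ ^ (γ₁ + γ₂).card) := by
        rw [← Cardinal.lift_mul, Ordinal.card_add, Cardinal.power_add]

end CardLePowBelow

/-- Uniform continuity of `k` into a discrete space. -/
def UnifLocallyConstant {K W : Type*} {ι : Type*} [LinearOrder ι] (γ : ι)
    (d : K → K → ι) (k : K → W) : Prop :=
  ∃ δ < γ, ∀ a b, δ ≤ d a b → k a = k b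

namespace Function.Pullback

variable {K X Y Z : Type*} {f : X → Z} {g : Y → Z}

theorem fst_surjective (hg : Surjective g) : Surjective (@fst X Z Y f g) := fun x =>
  let ⟨y, hy⟩ := hg (f x)
  ⟨⟨(x, y), hy.symm⟩, rfl⟩

theorem snd_surjective (hf : Surjective f) : Surjective (@snd X Z Y f g) := fun y =>
  let ⟨x, hx⟩ := hf (g y)
  ⟨⟨(x, y), hx⟩, rfl⟩

def lift (a : K → X) (b : K → Y) (h : f ∘ a = g ∘ b) : K → f.Pullback g :=
  fun x => ⟨(a x, b x), congrFun h x⟩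

theorem unifLocallyConstant_lift {ι : Type*} [LinearOrder ι] {γ : ι} {d : K → K → ι}
    {a : K → X} {b : K → Y} (ha : UnifLocallyConstant γ d a) (hb : UnifLocallyConstant γ d b)
    (h : f ∘ a = g ∘ b) : UnifLocallyConstant γ d (lift a b h) := by
  obtain ⟨δ₁, hδ₁, ha⟩ := ha
  obtain ⟨δ₂, hδ₂, hb⟩ := hb
  refine ⟨max δ₁ δ₂, max_lt hδ₁ hδ₂, fun x y hxy => ?_⟩
  rw [max_le_iff] at hxy
  exact Subtype.ext (Prod.ext (ha x y hxy.1) (hb x y hxy.2))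

end Function.Pullback

theorem stmt10_general (κ lam : Cardinal.{0}) (hlam : lam.IsRegular)
    (K : Type u) (uK : K → K → Ordinal)
    (X Y Z : Type v)
    (hX : ∃ γ < lam.ord, Cardinal.mk X ≤ Cardinal.lift.{v} (κ ^ γ.card))
    (hY : ∃ γ < lam.ord, Cardinal.mk Y ≤ Cardinal.lift.{v} (κ ^ γ.card))
    (f : K → X) (g : K → Y)
    -- `f`, `g` are uniformly continuous into the discrete sets `X`, `Y`:
    -- there is `δ < λ` such that they are constant on every closed ball `B_δ(a)`
    (hf : ∃ δ < lam.ord, ∀ a b, δ ≤ uK a b → f a = f b)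
    (hg : ∃ δ < lam.ord, ∀ a b, δ ≤ uK a b → g a = g b)
    (q₁ : X → Z) (q₂ : Y → Z) (hq₁ : Surjective q₁) (hq₂ : Surjective q₂)
    (hcomm : q₁ ∘ f = q₂ ∘ g) :
    -- the pullback `W` is a discrete set of cardinality at most `|κ^γ'|` for some `γ' < λ`
    (∃ γ' < lam.ord,
      Cardinal.mk {p : X × Y // q₁ p.1 = q₂ p.2} ≤ Cardinal.lift.{v} (κ ^ γ'.card)) ∧
    -- the coordinate projections are surjective and commute with `q₁`, `q₂`
    Surjective (fun w : {p : X × Y // q₁ p.1 = q₂ p.2} => w.1.1) ∧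
    Surjective (fun w : {p : X × Y // q₁ p.1 = q₂ p.2} => w.1.2) ∧
    (∀ w : {p : X × Y // q₁ p.1 = q₂ p.2}, q₁ w.1.1 = q₂ w.1.2) ∧
    -- and there is a uniformly continuous `k : K → W` with `f = f₁ ∘ k`, `g = g₁ ∘ k`
    (∃ k : K → {p : X × Y // q₁ p.1 = q₂ p.2},
      (∃ δ < lam.ord, ∀ a b, δ ≤ uK a b → k a = k b) ∧
      (∀ a, ((k a : X × Y).1 = f a)) ∧ (∀ a, ((k a : X × Y).2 = g a))) := by
  refine ⟨(CardLePowBelow.prod hlam.aleph0_le hX hY).of_injective Subtype.val_injective,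
    Pullback.fst_surjective hq₂, Pullback.snd_surjective hq₁, fun w => w.2,
    Pullback.lift f g hcomm, Pullback.unifLocallyConstant_lift hf hg hcomm,
    fun _ => rfl, fun _ => rfl⟩

theorem stmt10 (κ lam : Cardinal.{0}) (hκ : κ.IsRegular) (hlam : lam.IsRegular)
    (hle : lam ≤ κ)
    (K : Type u) (uK : K → K → Ordinal) (hu : IsUltrametric lam.ord uK)
    (hwK : WeightLE K (ballTopology lam.ord uK) κ)
    (X Y Z : Type v)
    (hX : ∃ γ < lam.ord, Cardinal.mk X ≤ Cardinal.lift.{v} (κ ^ γ.card))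
    (hY : ∃ γ < lam.ord, Cardinal.mk Y ≤ Cardinal.lift.{v} (κ ^ γ.card))
    (hZ : ∃ γ < lam.ord, Cardinal.mk Z ≤ Cardinal.lift.{v} (κ ^ γ.card))
    (f : K → X) (g : K → Y)
    -- `f`, `g` are uniformly continuous into the discrete sets `X`, `Y`:
    -- there is `δ < λ` such that they are constant on every closed ball `B_δ(a)`
    (hf : ∃ δ < lam.ord, ∀ a b, δ ≤ uK a b → f a = f b)
    (hg : ∃ δ < lam.ord, ∀ a b, δ ≤ uK a b → g a = g b)
    (q₁ : X → Z) (q₂ : Y → Z) (hq₁ : Surjective q₁) (hq₂ : Surjective q₂)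
    (hcomm : q₁ ∘ f = q₂ ∘ g) :
    -- the pullback `W` is a discrete set of cardinality at most `|κ^γ'|` for some `γ' < λ`
    (∃ γ' < lam.ord,
      Cardinal.mk {p : X × Y // q₁ p.1 = q₂ p.2} ≤ Cardinal.lift.{v} (κ ^ γ'.card)) ∧
    -- the coordinate projections are surjective and commute with `q₁`, `q₂`
    Surjective (fun w : {p : X × Y // q₁ p.1 = q₂ p.2} => w.1.1) ∧
    Surjective (fun w : {p : X × Y // q₁ p.1 = q₂ p.2} => w.1.2) ∧
    (∀ w : {p : X × Y // q₁ p.1 = q₂ p.2}, q₁ w.1.1 = q₂ w.1.2) ∧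
    -- and there is a uniformly continuous `k : K → W` with `f = f₁ ∘ k`, `g = g₁ ∘ k`
    (∃ k : K → {p : X × Y // q₁ p.1 = q₂ p.2},
      (∃ δ < lam.ord, ∀ a b, δ ≤ uK a b → k a = k b) ∧
      (∀ a, ((k a : X × Y).1 = f a)) ∧ (∀ a, ((k a : X × Y).2 = g a))) :=
  stmt10_general κ lam hlam K uK X Y Z hX hY f g hf hg q₁ q₂ hq₁ hq₂ hcomm
end

section
/- Let κ and λ be infinite regular cardinals with λ ≤ κ. Then every λ-ultrametric space (K,u) of weight at most κ can be uniformly embedded into κ^λ in such a way that its image is a uniformly nowhere dense subset of κ^λ. -/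
open Set Function

universe u v

/-!
Code a point `a` by the function `β ↦ B_β(a)`, where for each radius `β < λ` the balls of
radius `β` are numbered by ordinals below `κ`. This is possible because distinct balls of the
same radius are disjoint open sets, so each contains its own member of a base of size `≤ κ`.
The codes of `a` and `b` then agree exactly at the coordinates `β ≤ u(a, b)`, which makes the
coding a uniform embedding. Keeping one value `v < κ` out of the numbering, every `b ∈ κ^λ`
lies in `B_α(a)` for the point `a` obtained from `b` by setting its `α`-th coordinate to `v`,
while `B_{α+1}(a)` contains no code.
-/

open Cardinal Topology

namespace IsUltrametric

variable {X : Type u} {γ : Ordinal} {uX : X → X → Ordinal}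

theorem mem_ball_self (hu : IsUltrametric γ uX) {α : Ordinal} (hα : α ≤ γ) (x : X) :
    x ∈ Ball uX α x := by
  simpa [Ball, (hu.eq_gamma_iff x x).mpr rfl] using hα

theorem lt_of_ne (hu : IsUltrametric γ uX) {x y : X} (hxy : x ≠ y) : uX x y < γ :=
  (hu.le_gamma x y).lt_of_ne fun h => hxy ((hu.eq_gamma_iff x y).mp h)

theorem ball_eq_of_le (hu : IsUltrametric γ uX) {α : Ordinal} {x y : X} (h : α ≤ uX x y) :
    Ball uX α x = Ball uX α y := by
  ext z
  constructor
  · intro hz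
    exact (le_min (hu.symm x y ▸ h) hz).trans (hu.triangle x y z)
  · intro hz
    exact (le_min h hz).trans (hu.triangle y x z)

theorem ball_eq_iff (hu : IsUltrametric γ uX) {α : Ordinal} (hα : α ≤ γ) {x y : X} :
    Ball uX α x = Ball uX α y ↔ α ≤ uX x y :=
  ⟨fun h => (h ▸ hu.mem_ball_self hα y : y ∈ Ball uX α x), hu.ball_eq_of_le⟩

theorem ball_eq_of_mem_of_mem (hu : IsUltrametric γ uX) {α : Ordinal} {x y z : X}
    (hx : z ∈ Ball uX α x) (hy : z ∈ Ball uX α y) : Ball uX α x = Ball uX α y :=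
  (hu.ball_eq_of_le hx).trans (hu.ball_eq_of_le hy).symm

theorem isOpen_ball {α : Ordinal} (hα : α < γ) (x : X) :
    IsOpen[ballTopology γ uX] (Ball uX α x) :=
  TopologicalSpace.isOpen_generateFrom_of_mem ⟨x, α, hα, rfl⟩

theorem mk_range_ball_le (hu : IsUltrametric γ uX) {c : Cardinal.{0}}
    (hw : WeightLE X (ballTopology γ uX) c) {α : Ordinal} (hα : α < γ) :
    #(range (Ball uX α)) ≤ lift.{u} c := by
  obtain ⟨B, hB, hBc⟩ := hw
  let := ballTopology γ uX
  have hsub : ∀ s : range (Ball uX α), ∃ w ∈ B, w.Nonempty ∧ w ⊆ s.1 := by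
    rintro ⟨_, x, rfl⟩
    obtain ⟨w, hwB, hxw, hws⟩ :=
      hB.exists_subset_of_mem_open (hu.mem_ball_self hα.le x) (isOpen_ball hα x)
    exact ⟨w, hwB, ⟨x, hxw⟩, hws⟩
  choose w hwB hwne hws using hsub
  have hinj : Injective fun s => (⟨w s, hwB s⟩ : B) := by
    rintro ⟨_, x, rfl⟩ ⟨_, y, rfl⟩ h
    obtain ⟨z, hz⟩ := hwne ⟨_, x, rfl⟩
    have hw_eq : w ⟨_, x, rfl⟩ = w ⟨_, y, rfl⟩ := congrArg Subtype.val h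
    have hz' : z ∈ w ⟨_, y, rfl⟩ := hw_eq ▸ hz
    exact Subtype.ext (hu.ball_eq_of_mem_of_mem (hws _ hz) (hws _ hz'))
  exact (mk_le_of_injective hinj).trans hBc

end IsUltrametric

theorem le_funUltra {κ lam : Cardinal.{0}} {a b : funSpace κ lam} {γ : Ordinal}
    (hγ : γ < lam.ord) (h : ∀ β : Iio lam.ord, (β : Ordinal) < γ → a β = b β) :
    γ ≤ funUltra κ lam a b :=
  le_csSup ⟨lam.ord, fun _ hx => hx.1.le⟩ ⟨hγ, h⟩

theorem funUltra_le_of_ne {κ lam : Cardinal.{0}} {a b : funSpace κ lam} (β : Iio lam.ord)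
    (h : a β ≠ b β) : funUltra κ lam a b ≤ β :=
  csSup_le' fun _ hx => not_lt.mp fun hlt => h (hx.2 β hlt)

theorem mk_compl_singleton_Iio_ord {κ : Cardinal.{0}} (hκ : ℵ₀ ≤ κ) (v : Iio κ.ord) :
    #({v}ᶜ : Set (Iio κ.ord)) = lift.{1} κ := by
  have hmk : #(Iio κ.ord) = lift.{1} κ := by rw [mk_Iio_ordinal, card_ord]
  have hinf : ℵ₀ ≤ #(Iio κ.ord) := hmk ▸ aleph0_le_lift.mpr hκ
  have : Infinite (Iio κ.ord) := infinite_iff.mpr hinf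
  rw [mk_compl_of_infinite _ (mk_singleton v ▸ one_lt_aleph0.trans_le hinf), hmk]

theorem unifNwd_of_forall_ne {κ lam : Cardinal.{0}} (hlam : ℵ₀ ≤ lam) (v : Iio κ.ord)
    {A : Set (funSpace κ lam)} (hA : ∀ x ∈ A, ∀ β, x β ≠ v) :
    UnifNwd lam.ord (funUltra κ lam) A := by
  intro α hα
  refine ⟨Order.succ α, Order.lt_succ α, (isSuccLimit_ord hlam).succ_lt hα, fun b => ?_⟩
  let a : funSpace κ lam := fun γ => if (γ : Ordinal) = α then v else b γ
  refine ⟨a, le_funUltra hα fun β hβ => (if_neg hβ.ne).symm, ?_⟩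
  refine eq_empty_of_forall_notMem fun c ⟨hc, hcA⟩ => ?_
  have hne : a ⟨α, hα⟩ ≠ c ⟨α, hα⟩ := by
    rw [show a ⟨α, hα⟩ = v from if_pos rfl]
    exact (hA c hcA _).symm
  exact (Order.lt_succ α).not_ge ((hc : _ ≤ _).trans (funUltra_le_of_ne _ hne))

def IsBallCoding {κ lam : Cardinal.{0}} {K : Type u} (uK : K → K → Ordinal)
    (η : K → funSpace κ lam) : Prop :=
  ∀ a b (β : Iio lam.ord), η a β = η b β ↔ (β : Ordinal) ≤ uK a b

theorem exists_isBallCoding {κ lam : Cardinal.{0}} (hκ : ℵ₀ ≤ κ) {K : Type u}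
    {uK : K → K → Ordinal} (hu : IsUltrametric lam.ord uK)
    (hw : WeightLE K (ballTopology lam.ord uK) κ) (v : Iio κ.ord) :
    ∃ η : K → funSpace κ lam, IsBallCoding uK η ∧ ∀ a β, η a β ≠ v := by
  have hemb : ∀ β : Iio lam.ord, Nonempty (range (Ball uK β) ↪ ({v}ᶜ : Set (Iio κ.ord))) := by
    intro β
    rw [← lift_mk_le', mk_compl_singleton_Iio_ord hκ, lift_lift]
    simpa only [lift_lift] using lift_le.{1}.mpr (hu.mk_range_ball_le hw β.2)
  let E := fun β => (hemb β).some
  refine ⟨fun a β => E β ⟨Ball uK β a, mem_range_self a⟩, fun a b β => ?_, fun a β => (E β _).2⟩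
  simp only [Subtype.coe_inj, (E β).injective.eq_iff, Subtype.mk.injEq]
  exact hu.ball_eq_iff β.2.le

namespace IsBallCoding

variable {κ lam : Cardinal.{0}} {K : Type u} {uK : K → K → Ordinal} {η : K → funSpace κ lam}

theorem exists_apply_ne (hη : IsBallCoding uK η) (hu : IsUltrametric lam.ord uK)
    (hlam : ℵ₀ ≤ lam) {a b : K} (hab : a ≠ b) :
    ∃ β : Iio lam.ord, (β : Ordinal) = Order.succ (uK a b) ∧ η a β ≠ η b β := by
  refine ⟨⟨_, (isSuccLimit_ord hlam).succ_lt (hu.lt_of_ne hab)⟩, rfl, fun h => ?_⟩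
  exact (Order.lt_succ _).not_ge ((hη a b _).mp h)

theorem injective (hη : IsBallCoding uK η) (hu : IsUltrametric lam.ord uK) (hlam : ℵ₀ ≤ lam) :
    Injective η := by
  intro a b h
  by_contra hab
  obtain ⟨β, -, hne⟩ := hη.exists_apply_ne hu hlam hab
  exact hne (congrFun h β)

theorem unifCont (hη : IsBallCoding uK η) : UnifCont lam.ord lam.ord uK (funUltra κ lam) η :=
  fun ε hε => ⟨ε, hε, fun a b hab => le_funUltra hε fun β hβ => (hη a b β).mpr (hβ.le.trans hab)⟩

theorem unifCont_inv (hη : IsBallCoding uK η) (hu : IsUltrametric lam.ord uK)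
    (hlam : ℵ₀ ≤ lam) :
    ∀ ε < lam.ord, ∃ δ < lam.ord, ∀ a b : K, δ ≤ funUltra κ lam (η a) (η b) → ε ≤ uK a b := by
  intro ε hε
  refine ⟨Order.succ ε, (isSuccLimit_ord hlam).succ_lt hε, fun a b h => ?_⟩
  by_cases hab : a = b
  · rw [hab, (hu.eq_gamma_iff b b).mpr rfl]
    exact hε.le
  obtain ⟨β, hβ, hne⟩ := hη.exists_apply_ne hu hlam hab
  exact Order.succ_le_succ_iff.mp (h.trans (hβ ▸ funUltra_le_of_ne β hne))

end IsBallCoding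

theorem stmt11_general (κ lam : Cardinal.{0}) (hκ : κ.IsRegular) (hlam : lam.IsRegular)
    (K : Type u) (uK : K → K → Ordinal) (hu : IsUltrametric lam.ord uK)
    (hw : WeightLE K (ballTopology lam.ord uK) κ) :
    ∃ η : K → funSpace κ lam,
      -- `η` is a uniform embedding ...
      Injective η ∧
      UnifCont lam.ord lam.ord uK (funUltra κ lam) η ∧
      (∀ ε < lam.ord, ∃ δ < lam.ord, ∀ a b : K,
        δ ≤ funUltra κ lam (η a) (η b) → ε ≤ uK a b) ∧
      -- ... whose image is uniformly nowhere dense in `κ^λ`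
      UnifNwd lam.ord (funUltra κ lam) (Set.range η) := by
  let v : Iio κ.ord := ⟨0, ord_pos.mpr hκ.pos⟩
  obtain ⟨η, hη, hv⟩ := exists_isBallCoding hκ.aleph0_le hu hw v
  refine ⟨η, hη.injective hu hlam.aleph0_le, hη.unifCont, hη.unifCont_inv hu hlam.aleph0_le,
    unifNwd_of_forall_ne hlam.aleph0_le v ?_⟩
  rintro _ ⟨a, rfl⟩
  exact hv a

theorem stmt11 (κ lam : Cardinal.{0}) (hκ : κ.IsRegular) (hlam : lam.IsRegular)
    (hle : lam ≤ κ)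
    (K : Type u) (uK : K → K → Ordinal) (hu : IsUltrametric lam.ord uK)
    (hw : WeightLE K (ballTopology lam.ord uK) κ) :
    ∃ η : K → funSpace κ lam,
      -- `η` is a uniform embedding ...
      Injective η ∧
      UnifCont lam.ord lam.ord uK (funUltra κ lam) η ∧
      (∀ ε < lam.ord, ∃ δ < lam.ord, ∀ a b : K,
        δ ≤ funUltra κ lam (η a) (η b) → ε ≤ uK a b) ∧
      -- ... whose image is uniformly nowhere dense in `κ^λ`
      UnifNwd lam.ord (funUltra κ lam) (Set.range η) :=
  stmt11_general κ lam hκ hlam K uK hu hw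
end
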